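/- arXiv:1509.02060 — 11 statements merged into one kernel-verified Lean document; each statement's English description precedes it below -/
import Mathlib

section
/- Given a counter machine M with N counters and a sequence τ of instructions, there exists a reliable τ-run of M (starting at the initial state with all counters zero) if and only if there exist both a lossy τ-run and an insertion-error τ-run of M. -/
/-- Operations of a counter machine with `N` counters. -/
inductive Op (N : ℕ) where
  | inc : Fin N → Op N
  | dec : Fin N → Op N
  | test : Fin N → Op N
  deriving DecidableEq

/-- A (Minsky) counter machine with state set `Q` and `N` counters. -/
structure CM (Q : Type*) (N : ℕ) where
  init : Q
  halt : Set Q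
  I : Q → Set (Op N × Q)

/-- A reliable `α`-step between configurations. -/
def ReliableStep {Q : Type*} {N : ℕ} (M : CM Q N) (α : Op N) (q : Q) (c : Fin N → ℕ)
    (q' : Q) (c' : Fin N → ℕ) : Prop :=
  (α, q') ∈ M.I q ∧
    match α with
    | .inc i => c' i = c i + 1 ∧ ∀ j, j ≠ i → c' j = c j
    | .dec i => c i = c' i + 1 ∧ ∀ j, j ≠ i → c' j = c j
    | .test i => c i = 0 ∧ ∀ j, c' j = c j

/-- A lossy `α`-step between configurations (counters may spontaneously decrease). -/
def LossyStep {Q : Type*} {N : ℕ} (M : CM Q N) (α : Op N) (q : Q) (c : Fin N → ℕ)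
    (q' : Q) (c' : Fin N → ℕ) : Prop :=
  (α, q') ∈ M.I q ∧
    match α with
    | .inc i => c' i ≤ c i + 1 ∧ ∀ j, j ≠ i → c' j ≤ c j
    | .dec i => c' i + 1 ≤ c i ∧ ∀ j, j ≠ i → c' j ≤ c j
    | .test i => c' i = 0 ∧ ∀ j, c' j ≤ c j

/-- An insertion-error `α`-step between configurations (counters may spontaneously increase). -/
def InsertionStep {Q : Type*} {N : ℕ} (M : CM Q N) (α : Op N) (q : Q) (c : Fin N → ℕ)
    (q' : Q) (c' : Fin N → ℕ) : Prop :=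
  (α, q') ∈ M.I q ∧
    match α with
    | .inc i => c i + 1 ≤ c' i ∧ ∀ j, j ≠ i → c j ≤ c' j
    | .dec i => c i ≤ c' i + 1 ∧ ∀ j, j ≠ i → c j ≤ c' j
    | .test i => c i = 0 ∧ ∀ j, c j ≤ c' j

/-- The state at time `n` determined by the instruction sequence `τ` (with `q 0 = q_init`). -/
def stateAt {Q : Type*} {N : ℕ} (M : CM Q N) (τ : ℕ → Op N × Q) : ℕ → Q
  | 0 => M.init
  | n + 1 => (τ (n + 1)).2

/-- `c` is (the counter part of) a reliable `τ`-run of length `B` of `M`,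
starting at the initial state with all counters zero. -/
def IsReliableRun {Q : Type*} {N : ℕ} (M : CM Q N) (B : ℕ∞) (τ : ℕ → Op N × Q)
    (c : ℕ → Fin N → ℕ) : Prop :=
  c 0 = (fun _ => 0) ∧
    ∀ n : ℕ, 0 < n → (n : ℕ∞) < B →
      ReliableStep M (τ n).1 (stateAt M τ (n - 1)) (c (n - 1)) (stateAt M τ n) (c n)

/-- `c` is (the counter part of) a lossy `τ`-run of length `B` of `M`. -/
def IsLossyRun {Q : Type*} {N : ℕ} (M : CM Q N) (B : ℕ∞) (τ : ℕ → Op N × Q)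
    (c : ℕ → Fin N → ℕ) : Prop :=
  c 0 = (fun _ => 0) ∧
    ∀ n : ℕ, 0 < n → (n : ℕ∞) < B →
      LossyStep M (τ n).1 (stateAt M τ (n - 1)) (c (n - 1)) (stateAt M τ n) (c n)

/-- `c` is (the counter part of) an insertion-error `τ`-run of length `B` of `M`. -/
def IsInsertionRun {Q : Type*} {N : ℕ} (M : CM Q N) (B : ℕ∞) (τ : ℕ → Op N × Q)
    (c : ℕ → Fin N → ℕ) : Prop :=
  c 0 = (fun _ => 0) ∧
    ∀ n : ℕ, 0 < n → (n : ℕ∞) < B →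
      InsertionStep M (τ n).1 (stateAt M τ (n - 1)) (c (n - 1)) (stateAt M τ n) (c n)

/-- The canonical (exact) counter sequence determined by `τ`. -/
def canon {Q : Type*} {N : ℕ} (τ : ℕ → Op N × Q) : ℕ → Fin N → ℕ
  | 0 => fun _ => 0
  | n + 1 => fun i =>
      match (τ (n + 1)).1 with
      | .inc j => if i = j then canon τ n i + 1 else canon τ n i
      | .dec j => if i = j then canon τ n i - 1 else canon τ n i
      | .test _ => canon τ n i

/-- **Faulty approximation** (Proposition on faulty approximation):
Given any sequence `τ` of instructions, there exists a reliable `τ`-run iff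
there exist both a lossy and an insertion-error `τ`-run. -/
theorem faulty_approximation {Q : Type*} {N : ℕ} (M : CM Q N) (B : ℕ∞) (hB : 0 < B)
    (τ : ℕ → Op N × Q) :
    (∃ c : ℕ → Fin N → ℕ, IsReliableRun M B τ c) ↔
      (∃ c : ℕ → Fin N → ℕ, IsLossyRun M B τ c) ∧
        (∃ c : ℕ → Fin N → ℕ, IsInsertionRun M B τ c) := by
  constructor
  · rintro ⟨c, h0, hstep⟩
    refine ⟨⟨c, h0, fun n hn hnB => ?_⟩, ⟨c, h0, fun n hn hnB => ?_⟩⟩ <;>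
      obtain ⟨hmem, hrest⟩ := hstep n hn hnB <;>
      refine ⟨hmem, ?_⟩ <;>
      rcases hα : (τ n).1 with i | i | i <;> rw [hα] at hrest <;>
      obtain ⟨h1, h2⟩ := hrest
    · exact ⟨h1.le, fun j hj => (h2 j hj).le⟩
    · exact ⟨h1.ge, fun j hj => (h2 j hj).le⟩
    · exact ⟨(h2 i).trans h1, fun j => (h2 j).le⟩
    · exact ⟨h1.ge, fun j hj => (h2 j hj).ge⟩
    · exact ⟨h1.le, fun j hj => (h2 j hj).ge⟩
    · exact ⟨h1, fun j => (h2 j).ge⟩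
  · rintro ⟨⟨c, hc0, hc⟩, ⟨d, hd0, hd⟩⟩
    set e := canon τ with he
    have key : ∀ n : ℕ, (n : ℕ∞) < B → ∀ i, c n i ≤ e n i ∧ e n i ≤ d n i := by
      intro n
      induction n with
      | zero => intro _ i; simp [hc0, hd0, he, canon]
      | succ m ih =>
        intro hnB i
        have hmB : ((m : ℕ) : ℕ∞) < B := lt_trans (by exact_mod_cast Nat.lt_succ_self m) hnB
        obtain ⟨_, hcs⟩ := hc (m + 1) (Nat.succ_pos m) hnB
        obtain ⟨_, hds⟩ := hd (m + 1) (Nat.succ_pos m) hnB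
        simp only [Nat.add_sub_cancel] at hcs hds
        obtain ⟨l1, l2⟩ := ih hmB i
        rcases hα' : (τ (m + 1)).1 with j | j | j <;>
          rw [hα'] at hcs hds <;>
          obtain ⟨hc1, hc2⟩ := hcs <;> obtain ⟨hd1, hd2⟩ := hds
        · have hec : e (m + 1) i = if i = j then e m i + 1 else e m i := by
            simp only [he, canon, hα']
          by_cases hij : i = j
          · subst hij; rw [if_pos rfl] at hec; omega
          · rw [if_neg hij] at hec
            have := hc2 i hij; have := hd2 i hij; omega
        · have hec : e (m + 1) i = if i = j then e m i - 1 else e m i := by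
            simp only [he, canon, hα']
          by_cases hij : i = j
          · subst hij; rw [if_pos rfl] at hec; omega
          · rw [if_neg hij] at hec
            have := hc2 i hij; have := hd2 i hij; omega
        · have hec : e (m + 1) i = e m i := by simp only [he, canon, hα']
          have := hc2 i; have := hd2 i; omega
    refine ⟨e, ?_, fun n hn hnB => ?_⟩
    · funext i; simp [he, canon]
    · obtain ⟨m, rfl⟩ : ∃ m, n = m + 1 := ⟨n - 1, by omega⟩
      have hmB : ((m : ℕ) : ℕ∞) < B := lt_trans (by exact_mod_cast Nat.lt_succ_self m) hnB
      obtain ⟨hmem, hcs⟩ := hc (m + 1) hn hnB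
      obtain ⟨_, hds⟩ := hd (m + 1) hn hnB
      simp only [Nat.add_sub_cancel] at hcs hds ⊢
      refine ⟨hmem, ?_⟩
      have km := key m hmB
      rcases hα' : (τ (m + 1)).1 with j | j | j <;>
        rw [hα'] at hcs hds <;>
        obtain ⟨hc1, hc2⟩ := hcs <;> obtain ⟨hd1, hd2⟩ := hds
      · have hec : ∀ i, e (m + 1) i = if i = j then e m i + 1 else e m i := fun i => by
          simp only [he, canon, hα']
        exact ⟨by rw [hec j, if_pos rfl], fun i hij => by rw [hec i, if_neg hij]⟩
      · have hec : ∀ i, e (m + 1) i = if i = j then e m i - 1 else e m i := fun i => by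
          simp only [he, canon, hα']
        refine ⟨?_, fun i hij => by rw [hec i, if_neg hij]⟩
        have h1 := (km j).1
        rw [hec j, if_pos rfl]
        omega
      · have hec : ∀ i, e (m + 1) i = e m i := fun i => by simp only [he, canon, hα']
        have hz : e m j = 0 := by have := (km j).2; omega
        exact ⟨hz, fun i => by rw [hec i]⟩
end

section
/- Suppose ⟨(q_n, c°(n)) : n < B⟩ is a lossy τ-run and ⟨(q_n, c•(n)) : n < B⟩ is an insertion-error τ-run for the same instruction sequence τ = ⟨(α_n, q_n) : 0 < n < B⟩. Then there exists a sequence ⟨c(n) : n < B⟩ of N-tuples of natural numbers such that for every n < B: (a) c°_i(n) ≤ c_i(n) ≤ c•_i(n) for every i < N, and (b) if n > 0 then there is a reliable α_n-step from (q_{n-1}, c(n-1)) to (q_n, c(n)). Consequently ⟨(q_n, c(n)) : n < B⟩ is a reliable τ-run sandwiched between the lossy and insertion-error runs. -/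
/-- Given a lossy `τ`-run and an insertion-error `τ`-run for the same instruction sequence `τ`,
there is a sequence of counter vectors sandwiched between them that forms a reliable `τ`-run. -/
theorem sandwiched_reliable_run {Q : Type*} {N : ℕ} (M : CM Q N) (B : ℕ∞)
    (τ : ℕ → Op N × Q) (clo cins : ℕ → Fin N → ℕ)
    (hlo : IsLossyRun M B τ clo) (hins : IsInsertionRun M B τ cins) :
    ∃ c : ℕ → Fin N → ℕ, IsReliableRun M B τ c ∧
      ∀ n : ℕ, (n : ℕ∞) < B → ∀ i : Fin N, clo n i ≤ c n i ∧ c n i ≤ cins n i := by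
  classical
  -- construct the sandwiched run
  let c : ℕ → Fin N → ℕ := fun n => Nat.rec (fun _ => 0)
    (fun m cm => match (τ (m + 1)).1 with
      | .inc i => Function.update cm i (cm i + 1)
      | .dec i => Function.update cm i (cm i - 1)
      | .test _ => cm) n
  have hc0 : c 0 = fun _ => 0 := rfl
  -- the sandwich invariant, by induction
  have key : ∀ n : ℕ, (n : ℕ∞) < B → ∀ i : Fin N, clo n i ≤ c n i ∧ c n i ≤ cins n i := by
    intro n
    induction n with
    | zero =>
      intro _ i
      simp [hc0, hlo.1, hins.1]
    | succ m ih =>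
      intro hm1 i
      have hm : (m : ℕ∞) < B := lt_trans (by exact_mod_cast Nat.lt_succ_self m) hm1
      have hstep_lo := (hlo.2 (m + 1) (Nat.succ_pos m) hm1).2
      have hstep_ins := (hins.2 (m + 1) (Nat.succ_pos m) hm1).2
      simp only [Nat.add_sub_cancel] at hstep_lo hstep_ins
      have hcsucc : c (m + 1) = match (τ (m + 1)).1 with
          | .inc i => Function.update (c m) i (c m i + 1)
          | .dec i => Function.update (c m) i (c m i - 1)
          | .test _ => c m := rfl
      rcases hα : (τ (m + 1)).1 with j | j | j <;>
        rw [hα] at hstep_lo hstep_ins hcsucc <;> rw [hcsucc]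
      · -- inc
        by_cases hij : i = j
        · subst hij
          simp only [Function.update_self]
          exact ⟨le_trans hstep_lo.1 (Nat.succ_le_succ (ih hm i).1),
            le_trans (Nat.succ_le_succ (ih hm i).2) hstep_ins.1⟩
        · simp only [Function.update_of_ne hij]
          exact ⟨le_trans (hstep_lo.2 i hij) (ih hm i).1,
            le_trans (ih hm i).2 (hstep_ins.2 i hij)⟩
      · -- dec
        by_cases hij : i = j
        · subst hij
          simp only [Function.update_self]
          constructor
          · have : clo (m + 1) i + 1 ≤ c m i := le_trans hstep_lo.1 (ih hm i).1
            omega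
          · have : c m i ≤ cins (m + 1) i + 1 := le_trans (ih hm i).2 hstep_ins.1
            omega
        · simp only [Function.update_of_ne hij]
          exact ⟨le_trans (hstep_lo.2 i hij) (ih hm i).1,
            le_trans (ih hm i).2 (hstep_ins.2 i hij)⟩
      · -- test
        exact ⟨le_trans (hstep_lo.2 i) (ih hm i).1,
          le_trans (ih hm i).2 (hstep_ins.2 i)⟩
  refine ⟨c, ⟨hc0, ?_⟩, key⟩
  intro n hn hnB
  obtain ⟨m, rfl⟩ : ∃ m, n = m + 1 := ⟨n - 1, by omega⟩
  have hm : (m : ℕ∞) < B := lt_trans (by exact_mod_cast Nat.lt_succ_self m) hnB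
  have hmem := (hlo.2 (m + 1) (Nat.succ_pos m) hnB).1
  have hstep_lo := (hlo.2 (m + 1) (Nat.succ_pos m) hnB).2
  have hstep_ins := (hins.2 (m + 1) (Nat.succ_pos m) hnB).2
  simp only [Nat.add_sub_cancel] at hstep_lo hstep_ins ⊢
  have hcsucc : c (m + 1) = match (τ (m + 1)).1 with
      | .inc i => Function.update (c m) i (c m i + 1)
      | .dec i => Function.update (c m) i (c m i - 1)
      | .test _ => c m := rfl
  refine ⟨hmem, ?_⟩
  rcases hα : (τ (m + 1)).1 with j | j | j <;>
    rw [hα] at hstep_lo hstep_ins hcsucc <;> rw [hcsucc]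
  · exact ⟨Function.update_self j _ _,
      fun k hk => Function.update_of_ne hk _ _⟩
  · constructor
    · have h1 : clo (m + 1) j + 1 ≤ c m j := le_trans hstep_lo.1 (key m hm j).1
      simp only [Function.update_self]
      omega
    · exact fun k hk => Function.update_of_ne hk _ _
  · constructor
    · have := (key m hm j).2
      omega
    · exact fun k => rfl
end

section
/- In the construction of the sandwiched reliable run from a lossy run and an insertion-error run: if at step n the instruction is a zero-test α_n = c_i??, and inductively c°_j(n-1) ≤ c_j(n-1) ≤ c•_j(n-1) for all j, then c_i(n-1) = 0 (since the insertion-error step forces c•_i(n-1) = 0), and setting c(n) = c(n-1) gives a reliable c_i??-step with c°_j(n) ≤ c_j(n) ≤ c•_j(n) for all j < N. -/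
/-- The zero-test case in the construction of the sandwiched reliable run: if the instruction
is a zero-test `c_i??`, the sandwich inequality holds before the step, and there are lossy and
insertion-error `c_i??`-steps, then `c i = 0`, keeping the counters unchanged gives a reliable
`c_i??`-step, and the sandwich inequality holds after the step. -/
theorem sandwich_test_step {Q : Type*} {N : ℕ} (M : CM Q N) (i : Fin N)
    (q q' : Q) (clo clo' cins cins' c : Fin N → ℕ)
    (hlo : LossyStep M (Op.test i) q clo q' clo')
    (hins : InsertionStep M (Op.test i) q cins q' cins')
    (hsand : ∀ j : Fin N, clo j ≤ c j ∧ c j ≤ cins j) :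
    c i = 0 ∧ ReliableStep M (Op.test i) q c q' c ∧
      ∀ j : Fin N, clo' j ≤ c j ∧ c j ≤ cins' j := by
  obtain ⟨hm, hci, hlo2⟩ := hlo
  obtain ⟨_, hci', hins2⟩ := hins
  have hc0 : c i = 0 := Nat.le_antisymm (hci' ▸ (hsand i).2) (Nat.zero_le _)
  refine ⟨hc0, ⟨hm, hc0, fun j => rfl⟩, fun j => ⟨le_trans (hlo2 j) (hsand j).1,
    le_trans (hsand j).2 (hins2 j)⟩⟩
end

section
/- Let M be a model based on the δ-product of frames F_h = (W_h, R_h) and F_v = (W_v, R_v). If M, (r_h, r_v) ⊨ grid, where grid is the conjunction of □_v⁺◇_h δ and □_h◇_v(◇_h δ ∧ □_h δ), then there exist points x_n ∈ W_h ∩ W_v for n < ω such that for all n: (i) r_h R_h x_n; (ii) x_0 = r_v, and if n > 0 then x_0 R_v x_n; (iii) if n > 0 then x_{n-1} R_h x_n; (iv) if n > 0 then x_n is the only R_h-successor of x_{n-1}. -/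
/-- Formulas of the bimodal language with horizontal and vertical boxes
and the diagonal constant `δ`. -/
inductive Fml (P : Type*) where
  | var : P → Fml P
  | delta : Fml P
  | neg : Fml P → Fml P
  | and : Fml P → Fml P → Fml P
  | boxh : Fml P → Fml P
  | boxv : Fml P → Fml P
  deriving DecidableEq

namespace Fml

variable {P : Type*}

def or (φ ψ : Fml P) : Fml P := .neg (.and (.neg φ) (.neg ψ))
def imp (φ ψ : Fml P) : Fml P := Fml.or (.neg φ) ψ
def diah (φ : Fml P) : Fml P := .neg (.boxh (.neg φ))
def diav (φ : Fml P) : Fml P := .neg (.boxv (.neg φ))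
/-- `□_h⁺ φ := φ ∧ □_h φ` -/
def boxhp (φ : Fml P) : Fml P := .and φ (.boxh φ)
/-- `□_v⁺ φ := φ ∧ □_v φ` -/
def boxvp (φ : Fml P) : Fml P := .and φ (.boxv φ)
/-- `◇_h⁺ φ := φ ∨ ◇_h φ` -/
def diahp (φ : Fml P) : Fml P := Fml.or φ (diah φ)
/-- `◇_v⁺ φ := φ ∨ ◇_v φ` -/
def diavp (φ : Fml P) : Fml P := Fml.or φ (diav φ)

end Fml

/-- Satisfaction in a model based on the δ-product of the frames `(Wh, Rh)` and `(Wv, Rv)`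
(frames living inside the ambient type `U`), with valuation `v`.  The diagonal `δ` is
interpreted as `{(x,x) : x ∈ Wh ∩ Wv}`. -/
def dsat {U P : Type*} (Wh Wv : Set U) (Rh Rv : U → U → Prop) (v : P → Set (U × U)) :
    U × U → Fml P → Prop
  | p, .var q => p ∈ v q
  | p, .delta => p.1 = p.2 ∧ p.1 ∈ Wh ∧ p.1 ∈ Wv
  | p, .neg φ => ¬ dsat Wh Wv Rh Rv v p φ
  | p, .and φ ψ => dsat Wh Wv Rh Rv v p φ ∧ dsat Wh Wv Rh Rv v p ψ
  | p, .boxh φ => ∀ x : U, x ∈ Wh → Rh p.1 x → dsat Wh Wv Rh Rv v (x, p.2) φ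
  | p, .boxv φ => ∀ y : U, y ∈ Wv → Rv p.2 y → dsat Wh Wv Rh Rv v (p.1, y) φ

/-- **Grid generation** for `K ×^δ L`: if the formula
`grid = □_v⁺◇_hδ ∧ □_h◇_v(◇_hδ ∧ □_hδ)` holds at `(r_h, r_v)` in a model based on a
δ-product frame, then there are points `x_n ∈ W_h ∩ W_v` with
(i) `r_h R_h x_n`; (ii) `x_0 = r_v` and `x_0 R_v x_n` for `n > 0`;
(iii) `x_{n-1} R_h x_n` for `n > 0`; (iv) `x_n` is the only `R_h`-successor of `x_{n-1}`. -/
theorem grid_generation {U P : Type*} (Wh Wv : Set U) (Rh Rv : U → U → Prop)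
    (v : P → Set (U × U)) (rh rv : U) (hrh : rh ∈ Wh) (hrv : rv ∈ Wv)
    (hgrid : dsat Wh Wv Rh Rv v (rh, rv)
      (.and (Fml.boxvp (Fml.diah .delta))
        (.boxh (Fml.diav (.and (Fml.diah .delta) (.boxh .delta)))))) :
    ∃ x : ℕ → U, ∀ n : ℕ,
      x n ∈ Wh ∧ x n ∈ Wv ∧
      Rh rh (x n) ∧
      x 0 = rv ∧ (0 < n → Rv (x 0) (x n)) ∧
      (0 < n → Rh (x (n - 1)) (x n)) ∧
      (0 < n → ∀ z : U, z ∈ Wh → Rh (x (n - 1)) z → z = x n) := by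
  obtain ⟨⟨h1, h2⟩, h3⟩ := hgrid
  simp only [dsat, Fml.diah, Fml.diav, Fml.boxvp, not_forall, not_not] at h1 h2 h3
  obtain ⟨a0, ha0Wh, ha0R, ha0eq, -, -⟩ := h1
  have step : ∀ a : U, a ∈ Wh → Rh rh a →
      ∃ b, b ∈ Wh ∧ b ∈ Wv ∧ Rh rh b ∧ Rv rv b ∧ Rh a b ∧
        ∀ z, z ∈ Wh → Rh a z → z = b := by
    intro a haWh haR
    obtain ⟨y, hyWv, hyR, ⟨z, hzWh, hzR, hzeq, -, -⟩, hbox⟩ := h3 a haWh haR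
    obtain ⟨w, hwWh, hwR, hweq, -, -⟩ := h2 y hyWv hyR
    exact ⟨y, hweq ▸ hwWh, hyWv, hweq ▸ hwR, hyR, hzeq ▸ hzR,
      fun u huWh huR => (hbox u huWh huR).1⟩
  choose f hfWh hfWv hfR hfRv hfstep hfuniq using step
  let x : ℕ → {a : U // a ∈ Wh ∧ Rh rh a} := fun n =>
    Nat.rec ⟨a0, ha0Wh, ha0R⟩ (fun _ p => ⟨f p.1 p.2.1 p.2.2, hfWh _ _ _, hfR _ _ _⟩) n
  refine ⟨fun n => (x n).1, fun n => ?_⟩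
  cases n with
  | zero => exact ⟨ha0Wh, (ha0eq ▸ hrv : a0 ∈ Wv), ha0R, ha0eq, fun h => absurd h (lt_irrefl 0),
      fun h => absurd h (lt_irrefl 0), fun h => absurd h (lt_irrefl 0)⟩
  | succ m =>
    exact ⟨(x (m+1)).2.1, hfWv _ _ _, (x (m+1)).2.2, ha0eq,
      fun _ => (ha0eq.symm ▸ hfRv (x m).1 (x m).2.1 (x m).2.2 : Rv a0 _),
      fun _ => hfstep (x m).1 (x m).2.1 (x m).2.2,
      fun _ z hz hRz => hfuniq (x m).1 (x m).2.1 (x m).2.2 z hz hRz⟩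
end

section
/- Let M be a model based on a δ-product frame with grid points x_n as in the grid generation claim, and let C be a propositional variable with Δ(n) := {w ∈ W_v : x_0 R_v⁺ w and M, (x_n, w) ⊨ C}. If M, (x_n, x_0) ⊨ □_v⁺(□_h C → (C ∨ δ)), then Δ(n+1) ⊆ Δ(n) ∪ {x_n}. -/
/-- The set of points representing the current value of a counter: those `w ∈ W_v` with
`x_0 R_v⁺ w` (reflexive closure) at which the variable `C` is true in column `x_n`. -/
def counterSet {U P : Type*} (Wh Wv : Set U) (Rh Rv : U → U → Prop)
    (v : P → Set (U × U)) (x : ℕ → U) (C : P) (n : ℕ) : Set U :=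
  {w | w ∈ Wv ∧ (w = x 0 ∨ Rv (x 0) w) ∧ dsat Wh Wv Rh Rv v (x n, w) (.var C)}

/-- **Lossy incrementing** (Claim on lossy and insertion-error counting, item (ii)):
if `□_v⁺(□_h C → (C ∨ δ))` holds at `(x_n, x_0)`, then `Δ(n+1) ⊆ Δ(n) ∪ {x_n}`. -/
theorem lossy_inc_counting {U P : Type*} (Wh Wv : Set U) (Rh Rv : U → U → Prop)
    (v : P → Set (U × U)) (x : ℕ → U) (C : P) (n : ℕ)
    (hWh : ∀ m : ℕ, x m ∈ Wh) (hx0v : x 0 ∈ Wv)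
    (hsucc : ∀ m : ℕ, Rh (x m) (x (m + 1)))
    (huniq : ∀ m : ℕ, ∀ z : U, z ∈ Wh → Rh (x m) z → z = x (m + 1))
    (hform : dsat Wh Wv Rh Rv v (x n, x 0)
      (Fml.boxvp (Fml.imp (.boxh (.var C)) (Fml.or (.var C) .delta)))) :
    counterSet Wh Wv Rh Rv v x C (n + 1) ⊆ counterSet Wh Wv Rh Rv v x C n ∪ {x n} := by
  intro w hw
  obtain ⟨hwv, hR, hC⟩ := hw
  have himp : dsat Wh Wv Rh Rv v (x n, w)
      (Fml.imp (.boxh (.var C)) (Fml.or (.var C) .delta)) := by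
    rcases hR with h0 | hR
    · subst h0; exact hform.1
    · exact hform.2 w hwv hR
  have hboxh : dsat Wh Wv Rh Rv v (x n, w) (Fml.boxh (.var C)) := by
    intro z hz hRz
    have := huniq n z hz hRz
    subst this
    exact hC
  have hor : dsat Wh Wv Rh Rv v (x n, w) (Fml.or (.var C) .delta) := by
    by_contra hno
    exact himp ⟨not_not_intro hboxh, hno⟩
  rcases Classical.em (dsat Wh Wv Rh Rv v (x n, w) (.var C)) with hc | hc
  · exact Or.inl ⟨hwv, hR, hc⟩
  · have hδ : dsat Wh Wv Rh Rv v (x n, w) Fml.delta := by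
      by_contra hnδ
      exact hor ⟨hc, hnδ⟩
    exact Or.inr hδ.1.symm
end

section
/- Let M be a model based on a δ-product frame with grid points x_n as in the grid generation claim, and let C be a propositional variable with Δ(n) := {w ∈ W_v : x_0 R_v⁺ w and M, (x_n, w) ⊨ C}. If M, (x_n, x_0) ⊨ □_v⁺(C → □_h C) ∧ ◇_v⁺(¬C ∧ □_h C), then there is a point z with x_0 R_v⁺ z, z ∉ Δ(n), and Δ(n+1) ⊇ Δ(n) ∪ {z}; in particular |Δ(n+1)| ≥ |Δ(n)| + 1 when Δ(n) is finite. -/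
/-- **Insertion-error incrementing** (Claim on lossy and insertion-error counting, item (v)):
if `□_v⁺(C → □_h C) ∧ ◇_v⁺(¬C ∧ □_h C)` holds at `(x_n, x_0)`, then there is `z` with
`x_0 R_v⁺ z`, `z ∉ Δ(n)` and `Δ(n+1) ⊇ Δ(n) ∪ {z}`; in particular
`|Δ(n+1)| ≥ |Δ(n)| + 1` when `Δ(n)` is finite. -/
theorem insertion_inc_counting {U P : Type*} (Wh Wv : Set U) (Rh Rv : U → U → Prop)
    (v : P → Set (U × U)) (x : ℕ → U) (C : P) (n : ℕ)
    (hWh : ∀ m : ℕ, x m ∈ Wh) (hx0v : x 0 ∈ Wv)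
    (hsucc : ∀ m : ℕ, Rh (x m) (x (m + 1)))
    (huniq : ∀ m : ℕ, ∀ z : U, z ∈ Wh → Rh (x m) z → z = x (m + 1))
    (hform : dsat Wh Wv Rh Rv v (x n, x 0)
      (.and (Fml.boxvp (Fml.imp (.var C) (.boxh (.var C))))
            (Fml.diavp (.and (.neg (.var C)) (.boxh (.var C)))))) :
    (∃ z : U, z ∈ Wv ∧ (z = x 0 ∨ Rv (x 0) z) ∧ z ∉ counterSet Wh Wv Rh Rv v x C n ∧
        counterSet Wh Wv Rh Rv v x C n ∪ {z} ⊆ counterSet Wh Wv Rh Rv v x C (n + 1)) ∧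
      ((counterSet Wh Wv Rh Rv v x C n).Finite →
        Cardinal.mk (counterSet Wh Wv Rh Rv v x C n) + 1 ≤
          Cardinal.mk (counterSet Wh Wv Rh Rv v x C (n + 1))) := by
  simp only [dsat, Fml.boxvp, Fml.diavp, Fml.imp, Fml.or, Fml.diav, Fml.neg, Fml.and,
    not_and, not_not, not_forall, not_or] at hform
  obtain ⟨⟨h1, h2⟩, h3⟩ := hform
  have hz : ∃ z : U, z ∈ Wv ∧ (z = x 0 ∨ Rv (x 0) z) ∧ (x n, z) ∉ v C ∧
      (∀ y : U, y ∈ Wh → Rh (x n) y → (y, z) ∈ v C) := by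
    by_cases h0 : (x n, x 0) ∉ v C ∧ ∀ y ∈ Wh, Rh (x n) y → (y, x 0) ∈ v C
    · exact ⟨x 0, hx0v, Or.inl rfl, h0.1, h0.2⟩
    · have hpre : (x n, x 0) ∉ v C →
          ∃ y, ∃ _ : y ∈ Wh, ∃ _ : Rh (x n) y, (y, x 0) ∉ v C := by
        intro hnc
        by_contra hne
        push_neg at hne
        exact h0 ⟨hnc, fun y hy hr => hne y hy hr⟩
      obtain ⟨z, hzW, hzR, hznC, hzb⟩ := h3 hpre
      refine ⟨z, hzW, Or.inr hzR, hznC, fun y hy hr => ?_⟩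
      by_contra h
      exact hzb ⟨y, hy, hr, h⟩
  obtain ⟨z, hzW, hzR, hznC, hzbox⟩ := hz
  have hznΔ : z ∉ counterSet Wh Wv Rh Rv v x C n := fun hm => hznC hm.2.2
  have hsub : counterSet Wh Wv Rh Rv v x C n ∪ {z} ⊆ counterSet Wh Wv Rh Rv v x C (n + 1) := by
    rintro w (⟨hwW, hwR, hwC⟩ | rfl)
    · refine ⟨hwW, hwR, ?_⟩
      have hne : ¬∃ y, ∃ _ : y ∈ Wh, ∃ _ : Rh (x n) y, (y, w) ∉ v C := by
        rcases hwR with rfl | hr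
        · exact h1 hwC
        · exact h2 w hwW hr hwC
      show (x (n+1), w) ∈ v C
      by_contra h
      exact hne ⟨x (n+1), hWh (n+1), hsucc n, h⟩
    · exact ⟨hzW, hzR, hzbox (x (n+1)) (hWh (n+1)) (hsucc n)⟩
  refine ⟨⟨z, hzW, hzR, hznΔ, hsub⟩, fun _ => ?_⟩
  calc Cardinal.mk (counterSet Wh Wv Rh Rv v x C n) + 1
      = Cardinal.mk (insert z (counterSet Wh Wv Rh Rv v x C n) : Set U) :=
        (Cardinal.mk_insert hznΔ).symm
    _ ≤ Cardinal.mk (counterSet Wh Wv Rh Rv v x C (n + 1)) := by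
        apply Cardinal.mk_le_mk_of_subset
        exact Set.insert_subset_iff.mpr ⟨hsub (Or.inr rfl), fun w hw => hsub (Or.inl hw)⟩
end

section
/- Let F_h = (W_h, R_h) be a frame with R_h transitive and weakly connected, and let M be a model based on the δ-product of F_h and some frame F_v = (W_v, R_v). If M, (r_h, r_v) ⊨ δ ∧ □_h⁺◇_v(◇_h δ ∧ □_h□_h ¬δ), then there exist points x_n ∈ W_h ∩ W_v (n < ω) such that for all n: (i) x_0 = r_v and x_0 R_v x_n for n > 0; (ii) for n > 0, M, (x_{n-1}, x_n) ⊨ ◇_h δ ∧ □_h□_h ¬δ; (iii) for n > 0 and every z, x_{n-1} R_h z implies z = x_n or x_n R_h z; (iv) x_0 = r_h and x_m R_h x_n for all m < n. -/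
namespace Fml

variable {P : Type*}

def hCover : Fml P := .and (diah .delta) (.boxh (.boxh (.neg .delta)))

def lingrid : Fml P := .and .delta (boxhp (diav hCover))

end Fml

theorem exists_seq_of_forall_exists_mem {α : Type*} {S : Set α} {r : α → α → Prop} {a : α}
    (ha : a ∈ S) (h : ∀ x ∈ S, ∃ y ∈ S, r x y) :
    ∃ f : ℕ → α, f 0 = a ∧ ∀ n, f n ∈ S ∧ r (f n) (f (n + 1)) := by
  choose g hgS hgr using h
  let G : S → S := fun x => ⟨g x x.2, hgS x x.2⟩
  refine ⟨fun n => (G^[n] ⟨a, ha⟩).1, rfl, fun n => ⟨(G^[n] ⟨a, ha⟩).2, ?_⟩⟩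
  simp only [Function.iterate_succ_apply']
  exact hgr _ _

theorem Nat.rel_of_forall_rel_succ_of_lt_of_transOn {α : Type*} {S : Set α} {r : α → α → Prop}
    (htrans : ∀ a b c, a ∈ S → b ∈ S → c ∈ S → r a b → r b c → r a c) {f : ℕ → α}
    (hS : ∀ n, f n ∈ S) (hr : ∀ n, r (f n) (f (n + 1))) {m n : ℕ} (hmn : m < n) :
    r (f m) (f n) := by
  induction hmn with
  | refl => exact hr m
  | step _ ih => exact htrans _ _ _ (hS _) (hS _) (hS _) ih (hr _)

section DeltaProduct

variable {U P : Type*} {Wh Wv : Set U} {Rh Rv : U → U → Prop} {v : P → Set (U × U)}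

theorem dsat_diah {p : U × U} {φ : Fml P} :
    dsat Wh Wv Rh Rv v p φ.diah ↔ ∃ x ∈ Wh, Rh p.1 x ∧ dsat Wh Wv Rh Rv v (x, p.2) φ := by
  simp [Fml.diah, dsat]

theorem dsat_diav {p : U × U} {φ : Fml P} :
    dsat Wh Wv Rh Rv v p φ.diav ↔ ∃ y ∈ Wv, Rv p.2 y ∧ dsat Wh Wv Rh Rv v (p.1, y) φ := by
  simp [Fml.diav, dsat]

theorem dsat_hCover {a b : U} :
    dsat Wh Wv Rh Rv v (a, b) (Fml.hCover : Fml P) ↔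
      (b ∈ Wh ∧ b ∈ Wv ∧ Rh a b) ∧ ∀ z ∈ Wh, Rh a z → ¬ Rh z b := by
  simp only [Fml.hCover, dsat_diah, dsat]
  grind

theorem dsat_lingrid {r y : U} :
    dsat Wh Wv Rh Rv v (r, y) (Fml.lingrid : Fml P) ↔
      r = y ∧ r ∈ Wh ∧ r ∈ Wv ∧
        ∀ a ∈ Wh, (a = r ∨ Rh r a) → ∃ b ∈ Wv, Rv y b ∧ dsat Wh Wv Rh Rv v (a, b) Fml.hCover := by
  simp only [Fml.lingrid, Fml.boxhp, dsat_diav, dsat]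
  grind

theorem eq_or_rel_of_dsat_hCover
    (hwc : ∀ a b c : U, a ∈ Wh → b ∈ Wh → c ∈ Wh → Rh a b → Rh a c → b = c ∨ Rh b c ∨ Rh c b)
    {a b z : U} (ha : a ∈ Wh) (hab : dsat Wh Wv Rh Rv v (a, b) (Fml.hCover : Fml P))
    (hz : z ∈ Wh) (haz : Rh a z) : z = b ∨ Rh b z := by
  obtain ⟨⟨hb, -, hab⟩, hno⟩ := dsat_hCover.mp hab
  rcases hwc a b z ha hb hz hab haz with h | h | h
  · exact .inl h.symm
  · exact .inr h
  · exact absurd h (hno z hz haz)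

end DeltaProduct

theorem linear_grid_generation_general {U P : Type*} (Wh Wv : Set U) (Rh Rv : U → U → Prop)
    (v : P → Set (U × U))
    (htrans : ∀ a b c : U, a ∈ Wh → b ∈ Wh → c ∈ Wh → Rh a b → Rh b c → Rh a c)
    (hwc : ∀ a b c : U, a ∈ Wh → b ∈ Wh → c ∈ Wh → Rh a b → Rh a c →
      b = c ∨ Rh b c ∨ Rh c b)
    (rh rv : U)
    (hsat : dsat Wh Wv Rh Rv v (rh, rv)
      (.and .delta
        (Fml.boxhp (Fml.diav (.and (Fml.diah .delta) (.boxh (.boxh (.neg .delta)))))))) :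
    ∃ x : ℕ → U, ∀ n : ℕ,
      x n ∈ Wh ∧ x n ∈ Wv ∧
      x 0 = rv ∧ (0 < n → Rv (x 0) (x n)) ∧
      (0 < n → dsat Wh Wv Rh Rv v (x (n - 1), x n)
        (.and (Fml.diah .delta) (.boxh (.boxh (.neg .delta))))) ∧
      (0 < n → ∀ z : U, z ∈ Wh → Rh (x (n - 1)) z → z = x n ∨ Rh (x n) z) ∧
      x 0 = rh ∧ (∀ m : ℕ, m < n → Rh (x m) (x n)) := by
  obtain ⟨rfl, hrWh, hrWv, hcover⟩ := dsat_lingrid.mp hsat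
  let cone : Set U := {a | a ∈ Wh ∧ a ∈ Wv ∧ (a = rh ∨ Rh rh a)}
  have hstep : ∀ a ∈ cone, ∃ b ∈ cone, Rv rh b ∧ dsat Wh Wv Rh Rv v (a, b) Fml.hCover := by
    rintro a ⟨ha, -, hra⟩
    obtain ⟨b, hb, hrb, hab⟩ := hcover a ha hra
    obtain ⟨⟨hbWh, -, hRab⟩, -⟩ := dsat_hCover.mp hab
    have hrhb : Rh rh b := hra.elim (· ▸ hRab) (htrans _ _ _ hrWh ha hbWh · hRab)
    exact ⟨b, ⟨hbWh, hb, .inr hrhb⟩, hrb, hab⟩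
  obtain ⟨x, hx0, hx⟩ := exists_seq_of_forall_exists_mem (S := cone) ⟨hrWh, hrWv, .inl rfl⟩ hstep
  have hchain : ∀ m n, m < n → Rh (x m) (x n) := fun m n =>
    Nat.rel_of_forall_rel_succ_of_lt_of_transOn htrans (fun n => (hx n).1.1)
      (fun n => (dsat_hCover.mp (hx n).2.2).1.2.2)
  refine ⟨x, fun n => ⟨(hx n).1.1, (hx n).1.2.1, hx0, fun hn => ?_, fun hn => ?_, fun hn => ?_,
    hx0, fun m => hchain m n⟩⟩
  all_goals obtain ⟨k, rfl⟩ := Nat.exists_eq_add_one_of_ne_zero hn.ne'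
  · exact hx0 ▸ (hx k).2.1
  · exact (hx k).2.2
  · exact fun z hz => eq_or_rel_of_dsat_hCover hwc (hx k).1.1 (hx k).2.2 hz

/-- **Linear grid generation**: if `R_h` is transitive and weakly connected and the formula
`lingrid = δ ∧ □_h⁺◇_v(◇_hδ ∧ □_h□_h¬δ)` holds at `(r_h, r_v)` in a model based on a
δ-product frame, then there are points `x_n ∈ W_h ∩ W_v` with
(i) `x_0 = r_v` and `x_0 R_v x_n` for `n > 0`;
(ii) `◇_hδ ∧ □_h□_h¬δ` holds at `(x_{n-1}, x_n)` for `n > 0`;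
(iii) for `n > 0`, every `R_h`-successor `z` of `x_{n-1}` satisfies `z = x_n` or `x_n R_h z`;
(iv) `x_0 = r_h` and `x_m R_h x_n` for all `m < n`. -/
theorem linear_grid_generation {U P : Type*} (Wh Wv : Set U) (Rh Rv : U → U → Prop)
    (v : P → Set (U × U))
    (htrans : ∀ a b c : U, a ∈ Wh → b ∈ Wh → c ∈ Wh → Rh a b → Rh b c → Rh a c)
    (hwc : ∀ a b c : U, a ∈ Wh → b ∈ Wh → c ∈ Wh → Rh a b → Rh a c →
      b = c ∨ Rh b c ∨ Rh c b)
    (rh rv : U) (hrh : rh ∈ Wh) (hrv : rv ∈ Wv)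
    (hsat : dsat Wh Wv Rh Rv v (rh, rv)
      (.and .delta
        (Fml.boxhp (Fml.diav (.and (Fml.diah .delta) (.boxh (.boxh (.neg .delta)))))))) :
    ∃ x : ℕ → U, ∀ n : ℕ,
      x n ∈ Wh ∧ x n ∈ Wv ∧
      x 0 = rv ∧ (0 < n → Rv (x 0) (x n)) ∧
      (0 < n → dsat Wh Wv Rh Rv v (x (n - 1), x n)
        (.and (Fml.diah .delta) (.boxh (.boxh (.neg .delta))))) ∧
      (0 < n → ∀ z : U, z ∈ Wh → Rh (x (n - 1)) z → z = x n ∨ Rh (x n) z) ∧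
      x 0 = rh ∧ (∀ m : ℕ, m < n → Rh (x m) (x n)) :=
  linear_grid_generation_general Wh Wv Rh Rv v htrans hwc rh rv hsat
end

section
/- Let M be a model based on the δ-product of a transitive weakly connected frame F_h and a frame F_v, with grid points x_n as in the linear grid generation claim (so x_m R_h x_n for m < n, and x_{n-1} R_h z implies z = x_n or x_n R_h z). Then for any formula ψ, any w ∈ W_v, and any n < ω: if M, (x_{n+1}, w) ⊨ ψ → □_h ψ, then M, (x_n, w) ⊨ □_h ψ iff M, (x_{n+1}, w) ⊨ ψ. -/
/-- **Conditional horizontal next-time** along a linear grid: if `R_h` is transitive,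
`x_m R_h x_n` for `m < n`, and every `R_h`-successor `z` of `x_n` satisfies
`z = x_{n+1}` or `x_{n+1} R_h z`, then for any formula `ψ` such that `ψ → □_h ψ` holds at
`(x_{n+1}, w)`, we have: `□_h ψ` holds at `(x_n, w)` iff `ψ` holds at `(x_{n+1}, w)`. -/
theorem conditional_next_time {U P : Type*} (Wh Wv : Set U) (Rh Rv : U → U → Prop)
    (v : P → Set (U × U)) (x : ℕ → U)
    (htrans : ∀ a b c : U, a ∈ Wh → b ∈ Wh → c ∈ Wh → Rh a b → Rh b c → Rh a c)
    (hWh : ∀ n : ℕ, x n ∈ Wh)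
    (hsucc : ∀ n : ℕ, Rh (x n) (x (n + 1)))
    (hlin : ∀ n : ℕ, ∀ z : U, z ∈ Wh → Rh (x n) z → z = x (n + 1) ∨ Rh (x (n + 1)) z) :
    ∀ (ψ : Fml P) (w : U) (n : ℕ), w ∈ Wv →
      dsat Wh Wv Rh Rv v (x (n + 1), w) (Fml.imp ψ (.boxh ψ)) →
      (dsat Wh Wv Rh Rv v (x n, w) (.boxh ψ) ↔ dsat Wh Wv Rh Rv v (x (n + 1), w) ψ) := by
  intro ψ w n hw himp
  constructor
  · intro hbox
    exact hbox (x (n+1)) (hWh (n+1)) (hsucc n)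
  · intro hpsi z hz hrz
    simp only [Fml.imp, Fml.or, dsat] at himp
    have hbox : dsat Wh Wv Rh Rv v (x (n+1), w) (.boxh ψ) := by
      by_contra hc
      exact himp ⟨fun h => h hpsi, hc⟩
    rcases hlin n z hz hrz with h | h
    · subst h; exact hpsi
    · exact hbox z hz h
end

section
/- Let M be a model based on a δ-product frame with linear grid points x_n, propositional variables In and Out satisfying the persistence condition ξ (both In and Out are forward-persistent along R_h at all relevant points), and define Δ(n) := {w ∈ W_v : x_0 R_v⁺ w and M, (x_n, w) ⊨ In ∧ ¬Out}. If M, (x_n, x_0) ⊨ □_v⁺(□_h In → In) ∧ ◇_v⁺(In ∧ ¬Out ∧ □_h Out), then Δ(n+1) ⊆ Δ(n) − {z} for some z ∈ Δ(n); in particular |Δ(n+1)| ≤ |Δ(n)| − 1 when Δ(n) is finite and nonempty. -/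
/-- The set of points representing the current value of a counter in the linear case:
those `w ∈ W_v` with `x_0 R_v⁺ w` at which `In ∧ ¬Out` is true in column `x_n`. -/
def counterSetIO {U P : Type*} (Wh Wv : Set U) (Rh Rv : U → U → Prop)
    (v : P → Set (U × U)) (x : ℕ → U) (In Out : P) (n : ℕ) : Set U :=
  {w | w ∈ Wv ∧ (w = x 0 ∨ Rv (x 0) w) ∧
    dsat Wh Wv Rh Rv v (x n, w) (.and (.var In) (.neg (.var Out)))}

/-!
Let `z` be the witness of `◇_v⁺(In ∧ ¬Out ∧ □_h Out)`, so `z ∈ Δ(n)`. A point `w ∈ Δ(n+1)` lies in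
`Δ(n)`: `Out` persists along `R_h`, so `¬Out` at `(x_{n+1}, w)` forces `¬Out` at `(x_n, w)`; and
every `R_h`-successor of `x_n` is `x_{n+1}` or lies beyond it, where `In` holds by persistence, so
`□_h In` and hence, by `□_v⁺(□_h In → In)`, `In` hold at `(x_n, w)`. Finally `w ≠ z`, since
`□_h Out` at `(x_n, z)` gives `Out` at `(x_{n+1}, z)`.
-/

section Semantics

variable {U P : Type*} {Wh Wv : Set U} {Rh Rv : U → U → Prop} {v : P → Set (U × U)}
  {p : U × U} {φ ψ : Fml P}

lemma dsat_imp :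
    dsat Wh Wv Rh Rv v p (φ.imp ψ) ↔ (dsat Wh Wv Rh Rv v p φ → dsat Wh Wv Rh Rv v p ψ) := by
  simp only [Fml.imp, Fml.or, dsat]
  tauto

lemma dsat_of_dsat_boxvp (h : dsat Wh Wv Rh Rv v p φ.boxvp) {w : U} (hw : w ∈ Wv)
    (hpw : w = p.2 ∨ Rv p.2 w) : dsat Wh Wv Rh Rv v (p.1, w) φ := by
  rcases hpw with rfl | hpw
  · exact h.1
  · exact h.2 w hw hpw

lemma exists_dsat_of_dsat_diavp (h : dsat Wh Wv Rh Rv v p φ.diavp) (hp : p.2 ∈ Wv) :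
    ∃ w ∈ Wv, (w = p.2 ∨ Rv p.2 w) ∧ dsat Wh Wv Rh Rv v (p.1, w) φ := by
  simp only [Fml.diavp, Fml.or, Fml.diav, dsat, not_and, not_not, not_forall] at h
  by_cases hφ : dsat Wh Wv Rh Rv v p φ
  · exact ⟨p.2, hp, .inl rfl, hφ⟩
  · obtain ⟨w, hw, hpw, hφw⟩ := h hφ
    exact ⟨w, hw, .inr hpw, hφw⟩

end Semantics

section Counter

variable {U P : Type*} {Wh Wv : Set U} {Rh Rv : U → U → Prop} {v : P → Set (U × U)}
  {x : ℕ → U} {In Out : P} {n : ℕ}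

lemma mem_counterSetIO_iff {w : U} :
    w ∈ counterSetIO Wh Wv Rh Rv v x In Out n ↔
      w ∈ Wv ∧ (w = x 0 ∨ Rv (x 0) w) ∧ (x n, w) ∈ v In ∧ (x n, w) ∉ v Out := by
  simp only [counterSetIO, dsat, Set.mem_ofPred_eq]

lemma counterSetIO_succ_subset (hWh : x (n + 1) ∈ Wh) (hsucc : Rh (x n) (x (n + 1)))
    (hlin : ∀ z : U, z ∈ Wh → Rh (x n) z → z = x (n + 1) ∨ Rh (x (n + 1)) z)
    (hInPers : ∀ w : U, w ∈ Wv → (w = x 0 ∨ Rv (x 0) w) →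
      dsat Wh Wv Rh Rv v (x (n + 1), w) (Fml.imp (.var In) (.boxh (.var In))))
    (hOutPers : ∀ w : U, w ∈ Wv → (w = x 0 ∨ Rv (x 0) w) →
      dsat Wh Wv Rh Rv v (x n, w) (Fml.imp (.var Out) (.boxh (.var Out))))
    (hbox : dsat Wh Wv Rh Rv v (x n, x 0) (Fml.boxvp (Fml.imp (.boxh (.var In)) (.var In)))) :
    counterSetIO Wh Wv Rh Rv v x In Out (n + 1) ⊆ counterSetIO Wh Wv Rh Rv v x In Out n := by
  intro w hw
  obtain ⟨hwv, hwr, hwIn, hwOut⟩ := mem_counterSetIO_iff.mp hw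
  have hboxIn : dsat Wh Wv Rh Rv v (x n, w) (.boxh (.var In)) := fun y hy hny ↦ by
    rcases hlin y hy hny with rfl | hsy
    · exact hwIn
    · exact dsat_imp.mp (hInPers w hwv hwr) hwIn y hy hsy
  refine mem_counterSetIO_iff.mpr ⟨hwv, hwr, ?_, fun hOut ↦ hwOut ?_⟩
  · exact dsat_imp.mp (dsat_of_dsat_boxvp hbox hwv hwr) hboxIn
  · exact dsat_imp.mp (hOutPers w hwv hwr) hOut (x (n + 1)) hWh hsucc

lemma not_mem_counterSetIO_succ_of_boxh_out (hWh : x (n + 1) ∈ Wh)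
    (hsucc : Rh (x n) (x (n + 1))) {z : U}
    (hz : dsat Wh Wv Rh Rv v (x n, z) (.boxh (.var Out))) :
    z ∉ counterSetIO Wh Wv Rh Rv v x In Out (n + 1) := fun hmem ↦
  (mem_counterSetIO_iff.mp hmem).2.2.2 (hz (x (n + 1)) hWh hsucc)

end Counter

lemma Set.ncard_le_ncard_sub_one_of_subset_sdiff_singleton {α : Type*} {s t : Set α} {a : α}
    (ht : t.Finite) (ha : a ∈ t) (h : s ⊆ t \ {a}) : s.ncard ≤ t.ncard - 1 :=
  Set.ncard_sdiff_singleton_of_mem ha ▸ Set.ncard_le_ncard h (ht.subset Set.sdiff_subset)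

theorem linear_lossy_dec_counting_general {U P : Type*} (Wh Wv : Set U) (Rh Rv : U → U → Prop)
    (v : P → Set (U × U)) (x : ℕ → U) (In Out : P) (n : ℕ)
    (hWh : ∀ m : ℕ, x m ∈ Wh) (hx0v : x 0 ∈ Wv)
    (hsucc : ∀ m : ℕ, Rh (x m) (x (m + 1)))
    (hlin : ∀ m : ℕ, ∀ z : U, z ∈ Wh → Rh (x m) z → z = x (m + 1) ∨ Rh (x (m + 1)) z)
    (hpers : ∀ (m : ℕ) (w : U), w ∈ Wv → (w = x 0 ∨ Rv (x 0) w) →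
      dsat Wh Wv Rh Rv v (x m, w) (Fml.imp (.var In) (.boxh (.var In))) ∧
      dsat Wh Wv Rh Rv v (x m, w) (Fml.imp (.var Out) (.boxh (.var Out))))
    (hform : dsat Wh Wv Rh Rv v (x n, x 0)
      (.and (Fml.boxvp (Fml.imp (.boxh (.var In)) (.var In)))
            (Fml.diavp (.and (.var In) (.and (.neg (.var Out)) (.boxh (.var Out))))))) :
    (∃ z : U, z ∈ counterSetIO Wh Wv Rh Rv v x In Out n ∧
        counterSetIO Wh Wv Rh Rv v x In Out (n + 1) ⊆
          counterSetIO Wh Wv Rh Rv v x In Out n \ {z}) ∧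
      ((counterSetIO Wh Wv Rh Rv v x In Out n).Finite →
        (counterSetIO Wh Wv Rh Rv v x In Out n).Nonempty →
        (counterSetIO Wh Wv Rh Rv v x In Out (n + 1)).ncard ≤
          (counterSetIO Wh Wv Rh Rv v x In Out n).ncard - 1) := by
  obtain ⟨hbox, hdia⟩ := hform
  obtain ⟨z, hzv, hzr, hzIn, hzOut, hzBox⟩ := exists_dsat_of_dsat_diavp hdia hx0v
  have hz : z ∈ counterSetIO Wh Wv Rh Rv v x In Out n :=
    mem_counterSetIO_iff.mpr ⟨hzv, hzr, hzIn, hzOut⟩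
  have hsub : counterSetIO Wh Wv Rh Rv v x In Out (n + 1) ⊆
      counterSetIO Wh Wv Rh Rv v x In Out n \ {z} :=
    Set.subset_sdiff_singleton
      (counterSetIO_succ_subset (hWh (n + 1)) (hsucc n) (hlin n)
        (fun w hw hwr ↦ (hpers (n + 1) w hw hwr).1) (fun w hw hwr ↦ (hpers n w hw hwr).2) hbox)
      (not_mem_counterSetIO_succ_of_boxh_out (hWh (n + 1)) (hsucc n) hzBox)
  exact ⟨⟨z, hz, hsub⟩, fun hfin _ ↦
    Set.ncard_le_ncard_sub_one_of_subset_sdiff_singleton hfin hz hsub⟩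

/-- **Lossy decrementing in the linear case** (Claim on lossy and insertion-error counting,
item (iii)): under the persistence condition `ξ`, if
`□_v⁺(□_h In → In) ∧ ◇_v⁺(In ∧ ¬Out ∧ □_h Out)` holds at `(x_n, x_0)`, then
`Δ(n+1) ⊆ Δ(n) − {z}` for some `z ∈ Δ(n)`; in particular `|Δ(n+1)| ≤ |Δ(n)| − 1` when
`Δ(n)` is finite and nonempty. -/
theorem linear_lossy_dec_counting {U P : Type*} (Wh Wv : Set U) (Rh Rv : U → U → Prop)
    (v : P → Set (U × U)) (x : ℕ → U) (In Out : P) (n : ℕ)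
    (htrans : ∀ a b c : U, a ∈ Wh → b ∈ Wh → c ∈ Wh → Rh a b → Rh b c → Rh a c)
    (hWh : ∀ m : ℕ, x m ∈ Wh) (hx0v : x 0 ∈ Wv)
    (hsucc : ∀ m : ℕ, Rh (x m) (x (m + 1)))
    (hlin : ∀ m : ℕ, ∀ z : U, z ∈ Wh → Rh (x m) z → z = x (m + 1) ∨ Rh (x (m + 1)) z)
    (hpers : ∀ (m : ℕ) (w : U), w ∈ Wv → (w = x 0 ∨ Rv (x 0) w) →
      dsat Wh Wv Rh Rv v (x m, w) (Fml.imp (.var In) (.boxh (.var In))) ∧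
      dsat Wh Wv Rh Rv v (x m, w) (Fml.imp (.var Out) (.boxh (.var Out))))
    (hform : dsat Wh Wv Rh Rv v (x n, x 0)
      (.and (Fml.boxvp (Fml.imp (.boxh (.var In)) (.var In)))
            (Fml.diavp (.and (.var In) (.and (.neg (.var Out)) (.boxh (.var Out))))))) :
    (∃ z : U, z ∈ counterSetIO Wh Wv Rh Rv v x In Out n ∧
        counterSetIO Wh Wv Rh Rv v x In Out (n + 1) ⊆
          counterSetIO Wh Wv Rh Rv v x In Out n \ {z}) ∧
      ((counterSetIO Wh Wv Rh Rv v x In Out n).Finite →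
        (counterSetIO Wh Wv Rh Rv v x In Out n).Nonempty →
        (counterSetIO Wh Wv Rh Rv v x In Out (n + 1)).ncard ≤
          (counterSetIO Wh Wv Rh Rv v x In Out n).ncard - 1) :=
  linear_lossy_dec_counting_general Wh Wv Rh Rv v x In Out n hWh hx0v hsucc hlin hpers hform
end

section
/- The δ-product logic L_h ×^δ L_v is a conservative extension of the product logic L_h × L_v: a δ-free bimodal formula belongs to L_h ×^δ L_v if and only if it belongs to L_h × L_v. -/
/-- A formula is δ-free if the diagonal constant does not occur in it. -/
def deltaFree {P : Type*} : Fml P → Prop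
  | .var _ => True
  | .delta => False
  | .neg φ => deltaFree φ
  | .and φ ψ => deltaFree φ ∧ deltaFree ψ
  | .boxh φ => deltaFree φ
  | .boxv φ => deltaFree φ

universe u v

/-- A Kripke frame living inside the ambient type `U`. -/
structure KFrm (U : Type u) where
  W : Set U
  R : U → U → Prop

/-- Satisfaction in an abstract bimodal model (carrier `W` inside ambient type `A`),
ignoring the diagonal constant (δ is evaluated as falsum). -/
def bsat {A : Type u} {P : Type v} (W : Set A) (Rh Rv : A → A → Prop) (val : P → Set A) :
    A → Fml P → Prop
  | w, .var q => w ∈ val q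
  | _, .delta => False
  | w, .neg φ => ¬ bsat W Rh Rv val w φ
  | w, .and φ ψ => bsat W Rh Rv val w φ ∧ bsat W Rh Rv val w ψ
  | w, .boxh φ => ∀ u : A, u ∈ W → Rh w u → bsat W Rh Rv val u φ
  | w, .boxv φ => ∀ u : A, u ∈ W → Rv w u → bsat W Rh Rv val u φ

/-- Horizontal relation of the product of two frames. -/
def prodRh {U : Type u} (F G : KFrm U) : U × U → U × U → Prop :=
  fun p q => F.R p.1 q.1 ∧ p.2 = q.2

/-- Vertical relation of the product of two frames. -/
def prodRv {U : Type u} (F G : KFrm U) : U × U → U × U → Prop :=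
  fun p q => p.1 = q.1 ∧ G.R p.2 q.2

/-- Validity in the product logic `L_h × L_v` of the frame classes `Ch`, `Cv`
(δ is ignored, as in diagonal-free product logics). -/
def ProdValid {P : Type v} (Ch Cv : ∀ U : Type u, KFrm U → Prop) (φ : Fml P) : Prop :=
  ∀ (U : Type u) (F G : KFrm U), Ch U F → Cv U G →
    ∀ (val : P → Set (U × U)) (p : U × U), p ∈ F.W ×ˢ G.W →
      bsat (F.W ×ˢ G.W) (prodRh F G) (prodRv F G) val p φ

/-- Validity in the δ-product logic `L_h ×^δ L_v` of the frame classes `Ch`, `Cv`. -/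
def DProdValid {P : Type v} (Ch Cv : ∀ U : Type u, KFrm U → Prop) (φ : Fml P) : Prop :=
  ∀ (U : Type u) (F G : KFrm U), Ch U F → Cv U G →
    ∀ (val : P → Set (U × U)) (p : U × U), p ∈ F.W ×ˢ G.W →
      dsat F.W G.W F.R G.R val p φ

theorem dsat_iff_bsat {U : Type u} {P : Type v} (F G : KFrm U)
    (val : P → Set (U × U)) :
    ∀ (φ : Fml P), deltaFree φ → ∀ p : U × U, p ∈ F.W ×ˢ G.W →
      (dsat F.W G.W F.R G.R val p φ ↔
        bsat (F.W ×ˢ G.W) (prodRh F G) (prodRv F G) val p φ) := by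
  intro φ
  induction φ with
  | var q => intro _ p _; simp [dsat, bsat]
  | delta => intro h; exact h.elim
  | neg ψ ih => intro h p hp; simp only [dsat, bsat]; rw [ih h p hp]
  | and ψ χ ih1 ih2 =>
      intro h p hp; simp only [dsat, bsat]; rw [ih1 h.1 p hp, ih2 h.2 p hp]
  | boxh ψ ih =>
      intro h p hp
      simp only [dsat, bsat]
      constructor
      · rintro H ⟨x, y⟩ hu ⟨hR, he⟩
        have := H x hu.1 hR
        rw [ih h (x, p.2) ⟨hu.1, hp.2⟩] at this
        rwa [he] at this
      · intro H x hx hR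
        have := H (x, p.2) ⟨hx, hp.2⟩ ⟨hR, rfl⟩
        rw [ih h (x, p.2) ⟨hx, hp.2⟩]
        exact this
  | boxv ψ ih =>
      intro h p hp
      simp only [dsat, bsat]
      constructor
      · rintro H ⟨x, y⟩ hu ⟨he, hR⟩
        have := H y hu.2 hR
        rw [ih h (p.1, y) ⟨hp.1, hu.2⟩] at this
        rwa [he] at this
      · intro H y hy hR
        have := H (p.1, y) ⟨hp.1, hy⟩ ⟨rfl, hR⟩
        rw [ih h (p.1, y) ⟨hp.1, hy⟩]
        exact this

/-- **Conservativity** (Proposition): the δ-product logic `L_h ×^δ L_v` is a conservative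
extension of the product logic `L_h × L_v`: a δ-free formula belongs to `L_h ×^δ L_v`
iff it belongs to `L_h × L_v`. -/
theorem dprod_conservative {P : Type v} (Ch Cv : ∀ U : Type u, KFrm U → Prop)
    (φ : Fml P) (hφ : deltaFree φ) :
    DProdValid Ch Cv φ ↔ ProdValid Ch Cv φ := by
  constructor
  · intro H U F G hF hG val p hp
    rw [← dsat_iff_bsat F G val φ hφ p hp]
    exact H U F G hF hG val p hp
  · intro H U F G hF hG val p hp
    rw [dsat_iff_bsat F G val φ hφ p hp]
    exact H U F G hF hG val p hp
end

section
/- Let F = (W, R_h, R_v, D) be the three-element δ-frame with W = {x, y, z}, D = {z}, R_h = {(x,x),(y,y),(z,z),(y,z),(z,x),(y,x)}, R_v = {(x,x),(y,y),(z,z),(x,z),(z,y),(x,y)}. Then F is a p-morphic image of the δ-product (ω, ≤) ×^δ (ω, ≤), but F is not a p-morphic image of any finite δ-product frame. -/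
universe u

/-- A p-morphism between set-based δ-frames: a map of the carriers that is surjective onto
the target carrier, satisfies the forth and back conditions for both relations, and whose
preimage of the target diagonal is the source diagonal. -/
def IsPMorph {A : Type*} {B : Type*} (SA : Set A) (RhA RvA : A → A → Prop) (DA : Set A)
    (SB : Set B) (RhB RvB : B → B → Prop) (DB : Set B) (f : A → B) : Prop :=
  (∀ a ∈ SA, f a ∈ SB) ∧
  (∀ b ∈ SB, ∃ a ∈ SA, f a = b) ∧
  (∀ a a' : A, a ∈ SA → a' ∈ SA → RhA a a' → RhB (f a) (f a')) ∧
  (∀ (a : A) (b : B), a ∈ SA → b ∈ SB → RhB (f a) b →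
    ∃ a' ∈ SA, RhA a a' ∧ f a' = b) ∧
  (∀ a a' : A, a ∈ SA → a' ∈ SA → RvA a a' → RvB (f a) (f a')) ∧
  (∀ (a : A) (b : B), a ∈ SA → b ∈ SB → RvB (f a) b →
    ∃ a' ∈ SA, RvA a a' ∧ f a' = b) ∧
  (∀ a ∈ SA, (a ∈ DA ↔ f a ∈ DB))

/-- Horizontal relation of the δ-product `(ω, ≤) ×^δ (ω, ≤)`. -/
def omegaRh : ℕ × ℕ → ℕ × ℕ → Prop := fun p q => p.1 ≤ q.1 ∧ p.2 = q.2

/-- Vertical relation of the δ-product `(ω, ≤) ×^δ (ω, ≤)`. -/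
def omegaRv : ℕ × ℕ → ℕ × ℕ → Prop := fun p q => p.1 = q.1 ∧ p.2 ≤ q.2

/-- Diagonal of the δ-product `(ω, ≤) ×^δ (ω, ≤)`. -/
def omegaD : Set (ℕ × ℕ) := {p | p.1 = p.2}

/-- The horizontal relation of the three-element δ-frame `F` (`x = 0`, `y = 1`, `z = 2`):
`R_h = {(x,x),(y,y),(z,z),(y,z),(z,x),(y,x)}`. -/
def threeRh : Fin 3 → Fin 3 → Prop := fun a b =>
  (a, b) ∈ ({(0, 0), (1, 1), (2, 2), (1, 2), (2, 0), (1, 0)} : Set (Fin 3 × Fin 3))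

/-- The vertical relation of the three-element δ-frame `F`:
`R_v = {(x,x),(y,y),(z,z),(x,z),(z,y),(x,y)}`. -/
def threeRv : Fin 3 → Fin 3 → Prop := fun a b =>
  (a, b) ∈ ({(0, 0), (1, 1), (2, 2), (0, 2), (2, 1), (0, 1)} : Set (Fin 3 × Fin 3))

/-- The diagonal of the three-element δ-frame `F`: `D = {z}`. -/
def threeD : Set (Fin 3) := {2}

/- ### Auxiliary material -/

lemma threeRh_iff' (a b : Fin 3) : threeRh a b ↔
    ((a, b) = (0, 0) ∨ (a, b) = (1, 1) ∨ (a, b) = (2, 2) ∨ (a, b) = (1, 2) ∨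
      (a, b) = (2, 0) ∨ (a, b) = (1, 0)) := by
  simp [threeRh, Set.mem_insert_iff, Set.mem_singleton_iff]

lemma threeRv_iff' (a b : Fin 3) : threeRv a b ↔
    ((a, b) = (0, 0) ∨ (a, b) = (1, 1) ∨ (a, b) = (2, 2) ∨ (a, b) = (0, 2) ∨
      (a, b) = (2, 1) ∨ (a, b) = (0, 1)) := by
  simp [threeRv, Set.mem_insert_iff, Set.mem_singleton_iff]

instance threeRh.decidable (a b : Fin 3) : Decidable (threeRh a b) :=
  decidable_of_iff _ (threeRh_iff' a b).symm

instance threeRv.decidable (a b : Fin 3) : Decidable (threeRv a b) :=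
  decidable_of_iff _ (threeRv_iff' a b).symm

/-- The p-morphism onto the three-element frame. -/
def fmap : ℕ × ℕ → Fin 3 := fun p => if p.1 < p.2 then 1 else if p.1 = p.2 then 2 else 0

lemma fmap_lt {a b : ℕ} (h : a < b) : fmap (a, b) = 1 := by simp [fmap, h]

lemma fmap_eq {a b : ℕ} (h : a = b) : fmap (a, b) = 2 := by
  simp [fmap, h]

lemma fmap_gt {a b : ℕ} (h : b < a) : fmap (a, b) = 0 := by
  have h1 : ¬ a < b := by omega
  have h2 : ¬ a = b := by omega
  simp [fmap, h1, h2]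

theorem part1 : ∃ f : ℕ × ℕ → Fin 3,
    IsPMorph Set.univ omegaRh omegaRv omegaD Set.univ threeRh threeRv threeD f := by
  refine ⟨fmap, fun _ _ => trivial, ?_, ?_, ?_, ?_, ?_, ?_⟩
  · -- surjectivity
    intro b _
    fin_cases b
    · exact ⟨(1, 0), trivial, fmap_gt (by omega)⟩
    · exact ⟨(0, 1), trivial, fmap_lt (by omega)⟩
    · exact ⟨(0, 0), trivial, fmap_eq rfl⟩
  · -- forth horizontal
    rintro ⟨a, b⟩ ⟨a', b'⟩ - - ⟨hle, heq⟩
    dsimp at hle heq; subst heq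
    unfold fmap; dsimp only
    split_ifs <;> first | decide | (exfalso; omega)
  · -- back horizontal
    rintro ⟨a, b⟩ t - - hrel
    rcases lt_trichotomy a b with h | h | h
    · rw [fmap_lt h] at hrel
      fin_cases t
      · exact ⟨(b + 1, b), trivial, ⟨by omega, rfl⟩, fmap_gt (by omega)⟩
      · exact ⟨(a, b), trivial, ⟨le_refl _, rfl⟩, fmap_lt h⟩
      · exact ⟨(b, b), trivial, ⟨by omega, rfl⟩, fmap_eq rfl⟩
    · rw [fmap_eq h] at hrel
      fin_cases t
      · exact ⟨(b + 1, b), trivial, ⟨by omega, rfl⟩, fmap_gt (by omega)⟩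
      · exact absurd hrel (by decide)
      · exact ⟨(a, b), trivial, ⟨le_refl _, rfl⟩, fmap_eq h⟩
    · rw [fmap_gt h] at hrel
      fin_cases t
      · exact ⟨(a, b), trivial, ⟨le_refl _, rfl⟩, fmap_gt h⟩
      · exact absurd hrel (by decide)
      · exact absurd hrel (by decide)
  · -- forth vertical
    rintro ⟨a, b⟩ ⟨a', b'⟩ - - ⟨heq, hle⟩
    dsimp at hle heq; subst heq
    unfold fmap; dsimp only
    split_ifs <;> first | decide | (exfalso; omega)
  · -- back vertical
    rintro ⟨a, b⟩ t - - hrel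
    rcases lt_trichotomy a b with h | h | h
    · rw [fmap_lt h] at hrel
      fin_cases t
      · exact absurd hrel (by decide)
      · exact ⟨(a, b), trivial, ⟨rfl, le_refl _⟩, fmap_lt h⟩
      · exact absurd hrel (by decide)
    · rw [fmap_eq h] at hrel
      fin_cases t
      · exact absurd hrel (by decide)
      · exact ⟨(a, a + 1), trivial, ⟨rfl, by omega⟩, fmap_lt (by omega)⟩
      · exact ⟨(a, b), trivial, ⟨rfl, le_refl _⟩, fmap_eq h⟩
    · rw [fmap_gt h] at hrel
      fin_cases t
      · exact ⟨(a, b), trivial, ⟨rfl, le_refl _⟩, fmap_gt h⟩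
      · exact ⟨(a, a + 1), trivial, ⟨rfl, by omega⟩, fmap_lt (by omega)⟩
      · exact ⟨(a, a), trivial, ⟨rfl, by omega⟩, fmap_eq rfl⟩
  · -- diagonal
    rintro ⟨a, b⟩ -
    simp only [omegaD, Set.mem_setOf_eq, threeD, Set.mem_singleton_iff]
    constructor
    · intro h; exact fmap_eq h
    · intro h
      rcases lt_trichotomy a b with h' | h' | h'
      · rw [fmap_lt h'] at h; exact absurd h (by decide)
      · exact h'
      · rw [fmap_gt h'] at h; exact absurd h (by decide)

theorem part2 (U : Type u) (Wh Wv : Set U) (Rh Rv : U → U → Prop)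
    (hWh : Wh.Finite) (_hWv : Wv.Finite) (f : U × U → Fin 3) :
    ¬ IsPMorph (Wh ×ˢ Wv)
        (fun p q => Rh p.1 q.1 ∧ p.2 = q.2)
        (fun p q => p.1 = q.1 ∧ Rv p.2 q.2)
        {p : U × U | p.1 = p.2 ∧ p.1 ∈ Wh ∧ p.1 ∈ Wv}
        Set.univ threeRh threeRv threeD f := by
  rintro ⟨-, hsurj, hforthH, hbackH, -, hbackV, hdiag⟩
  -- the basic step: from any point with value `y = 1`, produce the next one
  have step : ∀ p : U × U, p ∈ Wh ×ˢ Wv → f p = 1 →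
      ∃ q : U × U, q ∈ Wh ×ˢ Wv ∧ f q = 1 ∧ q.1 = p.2 ∧ p.2 ∈ Wh ∧ p.2 ∈ Wv ∧
        Rh p.1 p.2 ∧ Rv p.2 q.2 := by
    intro p hp hf1
    have h2 : threeRh (f p) 2 := by rw [hf1]; decide
    obtain ⟨p', hp', ⟨hr, he⟩, hf'⟩ := hbackH p 2 hp (Set.mem_univ _) h2
    have hd : p'.1 = p'.2 ∧ p'.1 ∈ Wh ∧ p'.1 ∈ Wv :=
      (hdiag p' hp').2 (by rw [hf']; exact rfl)
    have hp1 : p'.1 = p.2 := by rw [hd.1, ← he]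
    have h1 : threeRv (f p') 1 := by rw [hf']; decide
    obtain ⟨q, hq, ⟨heq, hrv⟩, hfq⟩ := hbackV p' 1 hp' (Set.mem_univ _) h1
    refine ⟨q, hq, hfq, by rw [← heq, hp1], hp1 ▸ hd.2.1, hp1 ▸ hd.2.2,
      hp1 ▸ hr, ?_⟩
    · rw [he]; exact hrv
  choose nxt hmem' hf1' heq1 hWh' hWv' hRh' hRv' using step
  obtain ⟨p0, hp0, hf0⟩ := hsurj 1 (Set.mem_univ _)
  -- the sequence of y-points
  let T := {p : U × U // p ∈ Wh ×ˢ Wv ∧ f p = 1}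
  let g : ℕ → T := fun n => Nat.rec (⟨p0, hp0, hf0⟩ : T)
    (fun _ ih => ⟨nxt ih.1 ih.2.1 ih.2.2, hmem' ih.1 ih.2.1 ih.2.2, hf1' ih.1 ih.2.1 ih.2.2⟩) n
  have hg : ∀ n : ℕ, ((g (n + 1)).1 : U × U) = nxt (g n).1 (g n).2.1 (g n).2.2 := fun n => rfl
  -- the diagonal sequence
  set c : ℕ → U := fun n => ((g n).1 : U × U).2 with hc
  have hcWh : ∀ n, c n ∈ Wh := fun n => hWh' (g n).1 (g n).2.1 (g n).2.2
  have hcWv : ∀ n, c n ∈ Wv := fun n => hWv' (g n).1 (g n).2.1 (g n).2.2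
  have hcRv : ∀ n, Rv (c n) (c (n + 1)) := by
    intro n
    have := hRv' (g n).1 (g n).2.1 (g n).2.2
    rwa [← hg n] at this
  have hg1 : ∀ n, ((g (n + 1)).1 : U × U).1 = c n := by
    intro n
    have := heq1 (g n).1 (g n).2.1 (g n).2.2
    rwa [← hg n] at this
  have hcRh : ∀ n, Rh (c n) (c (n + 1)) := by
    intro n
    have := hRh' (g (n + 1)).1 (g (n + 1)).2.1 (g (n + 1)).2.2
    rwa [hg1 n] at this
  have hmemcc : ∀ n m : ℕ, (c n, c m) ∈ Wh ×ˢ Wv := fun n m =>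
    Set.mem_prod.2 ⟨hcWh n, hcWv m⟩
  have hdiagc : ∀ n, f (c n, c n) = 2 := by
    intro n
    have := (hdiag (c n, c n) (hmemcc n n)).1 ⟨rfl, hcWh n, hcWv n⟩
    simpa [threeD] using this
  have hfy : ∀ n, f (c n, c (n + 1)) = 1 := by
    intro n
    have h := (g (n + 1)).2.2
    have : ((g (n + 1)).1 : U × U) = (c n, c (n + 1)) := by
      apply Prod.ext
      · exact hg1 n
      · rfl
    rwa [this] at h
  -- key lemma: below the diagonal everything is `x = 0`
  have key : ∀ j i : ℕ, j < i → f (c i, c j) = 0 := by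
    intro j i hji
    induction i with
    | zero => omega
    | succ i ih =>
      rcases Nat.lt_or_ge j i with hji' | hji'
      · -- step case, use ih
        have h0 : f (c i, c j) = 0 := ih hji'
        have hrel := hforthH (c i, c j) (c (i + 1), c j) (hmemcc i j) (hmemcc (i + 1) j)
          ⟨hcRh i, rfl⟩
        rw [h0] at hrel
        rw [threeRh_iff'] at hrel
        rcases hrel with h | h | h | h | h | h <;>
          simp only [Prod.mk.injEq] at h <;> first | (exact h.2) | (exact absurd h.1 (by decide))
      · -- base case: j = i
        have hji'' : j = i := by omega
        subst hji''
        have hrel := hforthH (c j, c j) (c (j + 1), c j) (hmemcc j j) (hmemcc (j + 1) j)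
          ⟨hcRh j, rfl⟩
        rw [hdiagc j] at hrel
        rw [threeRh_iff'] at hrel
        rcases hrel with h | h | h | h | h | h <;>
            simp only [Prod.mk.injEq] at h
        · exact absurd h.1 (by decide)
        · exact absurd h.1 (by decide)
        · -- f (c (j+1), c j) = 2 : contradiction, it would force c (j+1) = c j
          exfalso
          have hd := (hdiag (c (j + 1), c j) (hmemcc (j + 1) j)).2
            (by rw [h.2]; exact rfl)
          have hcc : c (j + 1) = c j := hd.1
          have := hfy j
          rw [hcc] at this
          rw [hdiagc j] at this
          exact absurd this (by decide)
        · exact absurd h.1 (by decide)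
        · exact h.2
        · exact absurd h.1 (by decide)
  -- pigeonhole
  obtain ⟨n, m, hnm, hcnm⟩ := Set.Finite.exists_lt_map_eq_of_forall_mem hcWh hWh
  have h0 : f (c m, c n) = 0 := key n m hnm
  rw [← hcnm] at h0
  rw [hdiagc n] at h0
  exact absurd h0 (by decide)

set_option maxHeartbeats 800000 in
/-- The three-element δ-frame `F` is a p-morphic image of the δ-product
`(ω, ≤) ×^δ (ω, ≤)`, but `F` is not a p-morphic image of any finite δ-product frame. -/
theorem three_element_frame_pmorphism :
    (∃ f : ℕ × ℕ → Fin 3,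
      IsPMorph Set.univ omegaRh omegaRv omegaD Set.univ threeRh threeRv threeD f) ∧
    (∀ (U : Type u) (Wh Wv : Set U) (Rh Rv : U → U → Prop),
      Wh.Finite → Wv.Finite →
      ∀ f : U × U → Fin 3,
        ¬ IsPMorph (Wh ×ˢ Wv)
            (fun p q => Rh p.1 q.1 ∧ p.2 = q.2)
            (fun p q => p.1 = q.1 ∧ Rv p.2 q.2)
            {p : U × U | p.1 = p.2 ∧ p.1 ∈ Wh ∧ p.1 ∈ Wv}
            Set.univ threeRh threeRv threeD f) := by
  exact ⟨part1, fun U Wh Wv Rh Rv hWh hWv f => part2 U Wh Wv Rh Rv hWh hWv f⟩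
end
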